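/- Fix N ≥ 2 and Δ > 0, set z_i = iΔ/N for 0 ≤ i ≤ N and μ_{N,Δ} = (1/(2N))·Σ_{i=0}^{N−1}(δ_{z_i} + δ_{z_{i+1}}). Let ρ = (1/2)(δ₀ + δ_{Δ/(N−1)}) and let Π be the map sending μ_{N,Δ} to (1/N)·Σ_{i=0}^{N−1} δ_{iΔ/(N−1)}. Then the convolution ρ ∗ Π(μ_{N,Δ}) equals μ_{N, Δ(1+1/(N−1))}, i.e., μ_{N,Δ'} with Δ' = Δ + Δ/(N−1). -/

import Mathlib

/-!
Since `Δ + Δ/(N−1) = NΔ/(N−1)`, the atoms `iΔ/(N−1)` of the projection are exactly the grid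
points `iΔ'/N` of `μ_{N,Δ'}` for `Δ' = Δ + Δ/(N−1)`, and `Δ/(N−1) = Δ'/N` is one grid step.
Convolving with `ρ` therefore replaces each atom `δ_{iΔ'/N}` by `½(δ_{iΔ'/N} + δ_{(i+1)Δ'/N})`,
which is the `i`-th summand of `μ_{N,Δ'}`.
-/

open MeasureTheory Set
open scoped ENNReal

/-- The measure `μ_{N,Δ} = (1/(2N)) Σᵢ (δ_{iΔ/N} + δ_{(i+1)Δ/N})`. -/
noncomputable def muND (N : ℕ) (Δ : ℝ) : Measure ℝ :=
  (2 * (N : ℝ≥0∞))⁻¹ •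
    ∑ i ∈ Finset.range N,
      (Measure.dirac ((i : ℝ) * Δ / N) + Measure.dirac (((i : ℝ) + 1) * Δ / N))

namespace MeasureTheory.Measure

theorem sFinite_finset_sum {α ι : Type*} [MeasurableSpace α] (s : Finset ι)
    (ν : ι → Measure α) [∀ i, SFinite (ν i)] : SFinite (∑ i ∈ s, ν i) :=
  Finset.sum_induction ν SFinite (fun _ _ _ _ ↦ inferInstance) inferInstance
    fun _ _ ↦ inferInstance

variable {M : Type*} [AddMonoid M] [MeasurableSpace M] [MeasurableAdd₂ M]

theorem conv_finset_sum {ι : Type*} (s : Finset ι) (μ : Measure M) [SFinite μ]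
    (ν : ι → Measure M) [∀ i, SFinite (ν i)] :
    μ ∗ (∑ i ∈ s, ν i) = ∑ i ∈ s, μ ∗ ν i := by
  classical
  induction s using Finset.induction with
  | empty => simp
  | insert a t hat ih =>
    have := sFinite_finset_sum t ν
    rw [Finset.sum_insert hat, Finset.sum_insert hat, conv_add, ih]

end MeasureTheory.Measure

theorem convolution_projection_recursion_general
    (N : ℕ) (hN : 2 ≤ N) (Δ : ℝ) :
    Measure.conv ((2 : ℝ≥0∞)⁻¹ • (Measure.dirac (0:ℝ) + Measure.dirac (Δ / ((N : ℝ) - 1))))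
        ((N : ℝ≥0∞)⁻¹ • ∑ i ∈ Finset.range N, Measure.dirac ((i : ℝ) * Δ / ((N : ℝ) - 1)))
      = muND N (Δ + Δ / ((N : ℝ) - 1)) := by
  have hN' : (2 : ℝ) ≤ N := by exact_mod_cast hN
  have hN₀ : (N : ℝ) ≠ 0 := by linarith
  have hN₁ : (N : ℝ) - 1 ≠ 0 := by linarith
  have grid (x : ℝ) : x * Δ / (N - 1) = x * (Δ + Δ / (N - 1)) / N := by
    field_simp
    ring
  rw [Measure.conv_smul_left, Measure.conv_smul_right, Measure.conv_finset_sum, muND,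
    ENNReal.mul_inv (.inl two_ne_zero) (.inl ENNReal.ofNat_ne_top), smul_smul]
  refine congrArg _ (Finset.sum_congr rfl fun i _ ↦ ?_)
  rw [Measure.add_conv, Measure.dirac_conv_dirac, Measure.dirac_conv_dirac, zero_add, ← grid,
    ← grid]
  congr 2
  ring

/-- Convolving the reward `ρ = (1/2)(δ₀ + δ_{Δ/(N−1)})` with the quantile
projection `(1/N) Σᵢ δ_{iΔ/(N−1)}` of `μ_{N,Δ}` yields exactly
`μ_{N, Δ + Δ/(N−1)}`: the worst-case projection error recurs at every step. -/
theorem convolution_projection_recursion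
    (N : ℕ) (hN : 2 ≤ N) (Δ : ℝ) (hΔ : 0 < Δ) :
    Measure.conv ((2 : ℝ≥0∞)⁻¹ • (Measure.dirac (0:ℝ) + Measure.dirac (Δ / ((N : ℝ) - 1))))
        ((N : ℝ≥0∞)⁻¹ • ∑ i ∈ Finset.range N, Measure.dirac ((i : ℝ) * Δ / ((N : ℝ) - 1)))
      = muND N (Δ + Δ / ((N : ℝ) - 1)) :=
  convolution_projection_recursion_general N hN Δ
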